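/- arXiv:1102.2052 — 4 statements merged into one kernel-verified Lean document; each statement's English description precedes it below -/
import Mathlib

section
/- Let [4] be the fourth quantum integer for q with q+q⁻¹ = √((5+√21)/2), Z(Q³) = -(2/3)√(8+3√21), Z(TQ²) = (2√3+√7)/3, and Z(Q⁴) = (2/3)√(253/3 + 16√21). Then [4] + Z(TQ²)²/[4] + Z(Q³)²/[4] = Z(Q⁴). -/
/-!
With `δ = q + q⁻¹` one has `[4] = δ³ - 2δ`, and `δ² = (5 + √21)/2` gives `[4]² = 19 + 4√21`.
Since also `(2√3 + √7)² = 19 + 4√21`, the left side collapses to `(222 + 52√21)/(9 [4])`, and this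
is `(2/3)√(253/3 + 16√21)` because `(37 + (26/3)√21)² = (253/3 + 16√21)(19 + 4√21)`.
-/

open Real

lemma quantum_four_eq_cube_sub (q : ℝ) (hq : q ≠ 0) :
    q^3 + q + q⁻¹ + q⁻¹^3 = (q + q⁻¹)^3 - 2 * (q + q⁻¹) := by
  linear_combination (-3 * (q + q⁻¹)) * mul_inv_cancel₀ hq

section

variable {δ : ℝ} (hδ : δ^2 = (5 + √21) / 2)
include hδ

lemma sq_cube_sub_two_mul_of_sq_eq : (δ^3 - 2 * δ)^2 = 19 + 4 * √21 := by
  rw [show (δ^3 - 2 * δ)^2 = δ^2 * (δ^2 - 2)^2 by ring, hδ]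
  linear_combination ((√21 + 7) / 8) * sq_sqrt (show (0:ℝ) ≤ 21 by norm_num)

lemma cube_sub_two_mul_pos_of_sq_eq (hδ0 : 0 < δ) : 0 < δ^3 - 2 * δ := by
  have : 2 < δ^2 := by rw [hδ]; linarith [sqrt_nonneg 21]
  nlinarith

end

lemma sq_two_sqrt_three_add_sqrt_seven : (2 * √3 + √7)^2 = 19 + 4 * √21 := by
  have h37 : √3 * √7 = √21 := by rw [← sqrt_mul (by norm_num)]; norm_num
  linear_combination 4 * sq_sqrt (show (0:ℝ) ≤ 3 by norm_num)
    + sq_sqrt (show (0:ℝ) ≤ 7 by norm_num) + 4 * h37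

lemma sqrt_eq_div_of_sq_eq {X : ℝ} (hX : 0 < X) (hX2 : X^2 = 19 + 4 * √21) :
    √(253/3 + 16 * √21) = (37 + (26/3) * √21) / X := by
  rw [sqrt_eq_iff_eq_sq (by positivity) (by positivity), div_pow, eq_div_iff (by positivity)]
  linear_combination (253/3 + 16 * √21) * hX2 - (100/9) * sq_sqrt (show (0:ℝ) ≤ 21 by norm_num)

lemma bessel_identity {X : ℝ} (hX : 0 < X) (hX2 : X^2 = 19 + 4 * √21) :
    X + ((2 * √3 + √7) / 3)^2 / X + (-(2/3) * √(8 + 3 * √21))^2 / X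
      = (2/3) * √(253/3 + 16 * √21) := by
  rw [div_pow, sq_two_sqrt_three_add_sqrt_seven, mul_pow, sq_sqrt (by positivity),
    sqrt_eq_div_of_sq_eq hX hX2]
  field_simp
  linear_combination 9 * hX2

theorem stmt_11_general (q : ℝ)
    (hδ : q + q⁻¹ = Real.sqrt ((5 + Real.sqrt 21)/2)) :
    (q^3 + q + q⁻¹ + q⁻¹^3)
      + ((2*Real.sqrt 3 + Real.sqrt 7)/3)^2 / (q^3 + q + q⁻¹ + q⁻¹^3)
      + (-(2/3) * Real.sqrt (8 + 3*Real.sqrt 21))^2 / (q^3 + q + q⁻¹ + q⁻¹^3)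
    = (2/3) * Real.sqrt (253/3 + 16*Real.sqrt 21) := by
  have hδ0 : 0 < q + q⁻¹ := hδ ▸ sqrt_pos.2 (by positivity)
  have hq : q ≠ 0 := by rintro rfl; simp at hδ0
  have hδ2 : (q + q⁻¹)^2 = (5 + √21) / 2 := hδ ▸ sq_sqrt (by positivity)
  rw [quantum_four_eq_cube_sub q hq]
  exact bessel_identity (cube_sub_two_mul_pos_of_sq_eq hδ2 hδ0) (sq_cube_sub_two_mul_of_sq_eq hδ2)

/-- Bessel equality for the relation R3(Q):
    [4] + Z(TQ²)²/[4] + Z(Q³)²/[4] = Z(Q⁴), where [4] = q³+q+q⁻¹+q⁻³. -/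
theorem stmt_11 (q : ℝ) (hq : 1 < q)
    (hδ : q + q⁻¹ = Real.sqrt ((5 + Real.sqrt 21)/2)) :
    (q^3 + q + q⁻¹ + q⁻¹^3)
      + ((2*Real.sqrt 3 + Real.sqrt 7)/3)^2 / (q^3 + q + q⁻¹ + q⁻¹^3)
      + (-(2/3) * Real.sqrt (8 + 3*Real.sqrt 21))^2 / (q^3 + q + q⁻¹ + q⁻¹^3)
    = (2/3) * Real.sqrt (253/3 + 16*Real.sqrt 21) :=
  stmt_11_general q hδ
end

section
/- Let [4] be the fourth quantum integer for q with q+q⁻¹ = √((5+√21)/2), Z(T²Q) = √(151/18 + (41/6)√(7/3)), Z(TQ²) = (2√3+√7)/3, and Z(T²Q²) = (7/3)√((11+√21)/6). Then Z(T²Q)²/[4] + Z(TQ²)²/[4] = Z(T²Q²). -/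
/-! With `δ = q + q⁻¹` we have `[4] = δ³ - 2δ`, and `δ² = (5 + √21)/2` turns this into
`δ (1 + √21)/2`. Everything then lives in `ℚ(√21)` up to the single factor `δ`, which cancels
against `√((11 + √21)/6)` because `(11 + √21)/6 · (5 + √21)/2 = ((6 + √21)/3)²`. -/

open Real

lemma quantum_four_eq {K : Type*} [Field K] (q : K) :
    q ^ 3 + q + q⁻¹ + q⁻¹ ^ 3 = (q + q⁻¹) ^ 3 - 2 * (q + q⁻¹) := by
  rcases eq_or_ne q 0 with rfl | hq
  · simp
  · field_simp
    ring

lemma sqrt_seven_div_three : √(7 / 3) = √21 / 3 := by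
  rw [show (7 : ℝ) / 3 = 21 / 3 ^ 2 by norm_num, sqrt_div' _ (by norm_num), sqrt_sq (by norm_num)]

lemma two_mul_sqrt_three_add_sqrt_seven_sq : (2 * √3 + √7) ^ 2 = 19 + 4 * √21 := by
  have h21 : √3 * √7 = √21 := by rw [← sqrt_mul (by norm_num)]; norm_num
  linear_combination (4 : ℝ) * sq_sqrt (show (0 : ℝ) ≤ 3 by norm_num)
    + sq_sqrt (show (0 : ℝ) ≤ 7 by norm_num) + 4 * h21

lemma sqrt_mul_sqrt_eq_six_add_sqrt_21_div_three :
    √((11 + √21) / 6) * √((5 + √21) / 2) = (6 + √21) / 3 := by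
  have hs2 : √21 ^ 2 = 21 := sq_sqrt (by norm_num)
  rw [← sqrt_mul (by positivity), show (11 + √21) / 6 * ((5 + √21) / 2) = ((6 + √21) / 3) ^ 2 by
    linear_combination -hs2 / 36]
  exact sqrt_sq (by positivity)

theorem stmt_12_general (q : ℝ)
    (hδ : q + q⁻¹ = Real.sqrt ((5 + Real.sqrt 21)/2)) :
    (Real.sqrt (151/18 + (41/6) * Real.sqrt (7/3)))^2 / (q^3 + q + q⁻¹ + q⁻¹^3)
      + ((2*Real.sqrt 3 + Real.sqrt 7)/3)^2 / (q^3 + q + q⁻¹ + q⁻¹^3)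
    = (7/3) * Real.sqrt ((11 + Real.sqrt 21)/6) := by
  have hs2 : √21 ^ 2 = 21 := sq_sqrt (by norm_num)
  set δ := √((5 + √21) / 2) with hδ_def
  have hδ2 : δ ^ 2 = (5 + √21) / 2 := sq_sqrt (by positivity)
  have hδ_pos : 0 < δ := sqrt_pos.mpr (by positivity)
  have h_four : q ^ 3 + q + q⁻¹ + q⁻¹ ^ 3 = δ * (1 + √21) / 2 := by
    rw [quantum_four_eq, hδ]
    linear_combination δ * hδ2
  have h_sqrt : √((11 + √21) / 6) = (6 + √21) / (3 * δ) := by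
    rw [eq_div_iff (by positivity), mul_left_comm, hδ_def, sqrt_mul_sqrt_eq_six_add_sqrt_21_div_three]
    ring
  rw [h_four, h_sqrt, sqrt_seven_div_three, sq_sqrt (by positivity), div_pow,
    two_mul_sqrt_three_add_sqrt_seven_sq]
  field_simp
  linear_combination (-756 : ℝ) * hs2

/-- Norm computation for the relation R3(TQ):
    Z(T²Q)²/[4] + Z(TQ²)²/[4] = Z(T²Q²), where [4] = q³+q+q⁻¹+q⁻³. -/
theorem stmt_12 (q : ℝ) (hq : 1 < q)
    (hδ : q + q⁻¹ = Real.sqrt ((5 + Real.sqrt 21)/2)) :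
    (Real.sqrt (151/18 + (41/6) * Real.sqrt (7/3)))^2 / (q^3 + q + q⁻¹ + q⁻¹^3)
      + ((2*Real.sqrt 3 + Real.sqrt 7)/3)^2 / (q^3 + q + q⁻¹ + q⁻¹^3)
    = (7/3) * Real.sqrt ((11 + Real.sqrt 21)/6) :=
  stmt_12_general q hδ
end

section
/- The determinant a₀b₀' - a₀'b₀ with a₀ = i√((2/3)(1+√21)), b₀ = i√((2/3)(17-3√21)), a₀' = -√(5/18 + (1/6)√(7/3)), b₀' = √(8/9 + √(7/3)) equals (2/3)i(2√3+√7), and in particular is nonzero. -/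
open Complex

lemma aux_real_16 :
    Real.sqrt ((2/3) * (1 + Real.sqrt 21)) * Real.sqrt (8/9 + Real.sqrt (7/3))
      + Real.sqrt (5/18 + (1/6) * Real.sqrt (7/3)) * Real.sqrt ((2/3) * (17 - 3*Real.sqrt 21))
    = (2/3) * (2*Real.sqrt 3 + Real.sqrt 7) := by
  have hs0 : (0:ℝ) ≤ Real.sqrt 21 := Real.sqrt_nonneg 21
  have hs : Real.sqrt 21 ^ 2 = 21 := Real.sq_sqrt (by norm_num)
  have hs5 : Real.sqrt 21 < 5 := by nlinarith
  have h9 : Real.sqrt 9 = 3 := by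
    rw [show (9:ℝ) = 3^2 by norm_num, Real.sqrt_sq (by norm_num)]
  have h73 : Real.sqrt (7/3) = Real.sqrt 21 / 3 := by
    rw [show (21:ℝ) = (7/3) * 9 by norm_num, Real.sqrt_mul (by norm_num), h9]
    ring
  have h37 : Real.sqrt 3 * Real.sqrt 7 = Real.sqrt 21 := by
    rw [← Real.sqrt_mul (by norm_num)]; norm_num
  rw [h73]
  set s := Real.sqrt 21 with hs_def
  have hA : (0:ℝ) ≤ (2/3) * (1 + s) := by nlinarith
  have hB : (0:ℝ) ≤ 8/9 + s/3 := by nlinarith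
  have hC : (0:ℝ) ≤ 5/18 + (1/6) * (s/3) := by nlinarith
  have hD : (0:ℝ) ≤ (2/3) * (17 - 3*s) := by nlinarith
  rw [← Real.sqrt_mul hA, ← Real.sqrt_mul hC]
  have e1 : (2/3) * (1 + s) * (8/9 + s/3) = (142 + 22*s)/27 := by
    linear_combination (2/9) * hs
  have e2 : (5/18 + (1/6) * (s/3)) * ((2/3) * (17 - 3*s)) = (22 + 2*s)/27 := by
    linear_combination (-1/9) * hs
  rw [e1, e2]
  have t1 := Real.sqrt_nonneg ((142 + 22*s)/27)
  have t2 := Real.sqrt_nonneg ((22 + 2*s)/27)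
  have q1 : Real.sqrt ((142 + 22*s)/27) ^ 2 = (142 + 22*s)/27 :=
    Real.sq_sqrt (by nlinarith)
  have q2 : Real.sqrt ((22 + 2*s)/27) ^ 2 = (22 + 2*s)/27 :=
    Real.sq_sqrt (by nlinarith)
  have hprod : Real.sqrt ((142 + 22*s)/27) * Real.sqrt ((22 + 2*s)/27)
      = (32 + 12*s)/27 := by
    rw [← Real.sqrt_mul (by nlinarith)]
    rw [show (142 + 22*s)/27 * ((22 + 2*s)/27) = ((32 + 12*s)/27)^2 by
      linear_combination (44/729 - 144/729) * hs]
    exact Real.sqrt_sq (by nlinarith)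
  have hr0 : (0:ℝ) ≤ 2*Real.sqrt 3 + Real.sqrt 7 := by positivity
  have hr2 : ((2/3) * (2*Real.sqrt 3 + Real.sqrt 7))^2 = (76 + 16*s)/9 := by
    have h3 : Real.sqrt 3 ^ 2 = 3 := Real.sq_sqrt (by norm_num)
    have h7 : Real.sqrt 7 ^ 2 = 7 := Real.sq_sqrt (by norm_num)
    linear_combination (16/9) * h3 + (4/9) * h7 + (16/9) * h37
  have hr0' : (0:ℝ) ≤ (2/3) * (2*Real.sqrt 3 + Real.sqrt 7) := by positivity
  set X := Real.sqrt ((142 + 22*s)/27) + Real.sqrt ((22 + 2*s)/27) with hX_def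
  have hX0 : (0:ℝ) ≤ X := by positivity
  have hXr : X^2 = ((2/3) * (2*Real.sqrt 3 + Real.sqrt 7))^2 := by
    rw [hr2, hX_def]
    have : (Real.sqrt ((142 + 22*s)/27) + Real.sqrt ((22 + 2*s)/27))^2
        = Real.sqrt ((142 + 22*s)/27)^2 + Real.sqrt ((22 + 2*s)/27)^2
          + 2 * (Real.sqrt ((142 + 22*s)/27) * Real.sqrt ((22 + 2*s)/27)) := by ring
    rw [this, q1, q2, hprod]
    ring
  calc X = Real.sqrt (X^2) := (Real.sqrt_sq hX0).symm
    _ = _ := by rw [hXr, Real.sqrt_sq hr0']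

/-- The determinant a₀b₀' - a₀'b₀ of the shaded one-strand braiding substitute
    equations equals (2/3)i(2√3+√7), and in particular is nonzero. -/
theorem stmt_16 :
    (Complex.I * (Real.sqrt ((2/3) * (1 + Real.sqrt 21)) : ℂ)) *
        ((Real.sqrt (8/9 + Real.sqrt (7/3)) : ℝ) : ℂ)
      - (-(Real.sqrt (5/18 + (1/6) * Real.sqrt (7/3)) : ℝ) : ℂ) *
        (Complex.I * (Real.sqrt ((2/3) * (17 - 3*Real.sqrt 21)) : ℂ))
    = (2/3 : ℂ) * Complex.I * ((2*Real.sqrt 3 + Real.sqrt 7 : ℝ) : ℂ) ∧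
    (Complex.I * (Real.sqrt ((2/3) * (1 + Real.sqrt 21)) : ℂ)) *
        ((Real.sqrt (8/9 + Real.sqrt (7/3)) : ℝ) : ℂ)
      - (-(Real.sqrt (5/18 + (1/6) * Real.sqrt (7/3)) : ℝ) : ℂ) *
        (Complex.I * (Real.sqrt ((2/3) * (17 - 3*Real.sqrt 21)) : ℂ)) ≠ 0 := by
  have key : (Complex.I * (Real.sqrt ((2/3) * (1 + Real.sqrt 21)) : ℂ)) *
        ((Real.sqrt (8/9 + Real.sqrt (7/3)) : ℝ) : ℂ)
      - (-(Real.sqrt (5/18 + (1/6) * Real.sqrt (7/3)) : ℝ) : ℂ) *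
        (Complex.I * (Real.sqrt ((2/3) * (17 - 3*Real.sqrt 21)) : ℂ))
      = (2/3 : ℂ) * Complex.I * ((2*Real.sqrt 3 + Real.sqrt 7 : ℝ) : ℂ) := by
    have h := aux_real_16
    calc (Complex.I * (Real.sqrt ((2/3) * (1 + Real.sqrt 21)) : ℂ)) *
        ((Real.sqrt (8/9 + Real.sqrt (7/3)) : ℝ) : ℂ)
      - (-(Real.sqrt (5/18 + (1/6) * Real.sqrt (7/3)) : ℝ) : ℂ) *
        (Complex.I * (Real.sqrt ((2/3) * (17 - 3*Real.sqrt 21)) : ℂ))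
        = Complex.I * ((Real.sqrt ((2/3) * (1 + Real.sqrt 21)) *
            Real.sqrt (8/9 + Real.sqrt (7/3))
          + Real.sqrt (5/18 + (1/6) * Real.sqrt (7/3)) *
            Real.sqrt ((2/3) * (17 - 3*Real.sqrt 21)) : ℝ) : ℂ) := by
          push_cast; ring
      _ = Complex.I * (((2/3) * (2*Real.sqrt 3 + Real.sqrt 7) : ℝ) : ℂ) := by rw [h]
      _ = (2/3 : ℂ) * Complex.I * ((2*Real.sqrt 3 + Real.sqrt 7 : ℝ) : ℂ) := by
          push_cast; ring
  refine ⟨key, ?_⟩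
  rw [key]
  apply mul_ne_zero (mul_ne_zero (by norm_num) Complex.I_ne_zero)
  rw [Complex.ofReal_ne_zero]
  positivity
end

section
/- Suppose A, B, C, D ∈ ℝ and θ² = (3+√21)/2, and the equation (Aⁿ+Bⁿ)·θ²/√3 + (-(θ²/3)(A+B))ⁿ·√3 = (Cⁿ+Dⁿ)·θ²/√3 + (-(θ²/3)(C+D))ⁿ·√3 holds for all n ≥ 1. Then either (A = D and B = C) or (A = C or B = D). -/
/-- Claim A.1.1: if the power-sum identity
    (Aⁿ+Bⁿ)·θ²/√3 + (-(θ²/3)(A+B))ⁿ·√3 = (Cⁿ+Dⁿ)·θ²/√3 + (-(θ²/3)(C+D))ⁿ·√3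
    (with θ² = (3+√21)/2) holds for all n ≥ 1, then either (A = D and B = C)
    or (A = C or B = D). -/
theorem stmt_19 (A B C D : ℝ)
    (h : ∀ n : ℕ, 1 ≤ n →
      (A^n + B^n) * (((3 + Real.sqrt 21)/2) / Real.sqrt 3)
          + (-(((3 + Real.sqrt 21)/2)/3) * (A + B))^n * Real.sqrt 3
        = (C^n + D^n) * (((3 + Real.sqrt 21)/2) / Real.sqrt 3)
          + (-(((3 + Real.sqrt 21)/2)/3) * (C + D))^n * Real.sqrt 3) :
    (A = D ∧ B = C) ∨ (A = C ∨ B = D) := by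
  have hr : Real.sqrt 21 ^ 2 = 21 := Real.sq_sqrt (by norm_num)
  have hrnn : (0:ℝ) ≤ Real.sqrt 21 := Real.sqrt_nonneg 21
  set a : ℝ := -(((3 + Real.sqrt 21)/2)/3) with ha_def
  have ha : 3*a^2 + 3*a = 1 := by rw [ha_def]; linear_combination (1/12 : ℝ) * hr
  have haneg : a < 0 := by rw [ha_def]; nlinarith
  have ha0 : a ≠ 0 := ne_of_lt haneg
  have h3 : Real.sqrt 3 * Real.sqrt 3 = 3 := Real.mul_self_sqrt (by norm_num)
  have h30 : Real.sqrt 3 ≠ 0 := by positivity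
  have expand : ∀ X Y : ℝ, (X * (((3 + Real.sqrt 21)/2) / Real.sqrt 3) + Y * Real.sqrt 3) * Real.sqrt 3
      = X * (-3*a) + Y * 3 := by
    intro X Y
    rw [add_mul, mul_assoc, div_mul_cancel₀ _ h30, mul_assoc, h3, ha_def]
    ring
  have key : ∀ n : ℕ, 1 ≤ n →
      (A^n+B^n) * (-3*a) + (a*(A+B))^n * 3 = (C^n+D^n) * (-3*a) + (a*(C+D))^n * 3 := by
    intro n hn
    have h' := h n hn
    rw [← expand (A^n+B^n) ((a*(A+B))^n), ← expand (C^n+D^n) ((a*(C+D))^n), h']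
  have E2 : A^2+B^2-(C^2+D^2) = a*((A+B)^2-(C+D)^2) := by
    have k := key 2 (by norm_num)
    have h2 : (-3*a) * ((A^2+B^2-(C^2+D^2)) - a*((A+B)^2-(C+D)^2)) = 0 := by
      linear_combination k
    rcases mul_eq_zero.mp h2 with h' | h'
    · exact absurd (by linarith : a = 0) ha0
    · linarith
  have E3 : A^3+B^3-(C^3+D^3) = a^2*((A+B)^3-(C+D)^3) := by
    have k := key 3 (by norm_num)
    have h2 : (-3*a) * ((A^3+B^3-(C^3+D^3)) - a^2*((A+B)^3-(C+D)^3)) = 0 := by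
      linear_combination k
    rcases mul_eq_zero.mp h2 with h' | h'
    · exact absurd (by linarith : a = 0) ha0
    · linarith
  have E4 : A^4+B^4-(C^4+D^4) = a^3*((A+B)^4-(C+D)^4) := by
    have k := key 4 (by norm_num)
    have h2 : (-3*a) * ((A^4+B^4-(C^4+D^4)) - a^3*((A+B)^4-(C+D)^4)) = 0 := by
      linear_combination k
    rcases mul_eq_zero.mp h2 with h' | h'
    · exact absurd (by linarith : a = 0) ha0
    · linarith
  have E5 : A^5+B^5-(C^5+D^5) = a^4*((A+B)^5-(C+D)^5) := by
    have k := key 5 (by norm_num)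
    have h2 : (-3*a) * ((A^5+B^5-(C^5+D^5)) - a^4*((A+B)^5-(C+D)^5)) = 0 := by
      linear_combination k
    rcases mul_eq_zero.mp h2 with h' | h'
    · exact absurd (by linarith : a = 0) ha0
    · linarith
  by_cases hs : A+B = C+D
  · have hsq : A^2+B^2-(C^2+D^2) = 0 := by rw [E2, hs]; ring
    have hpq : A*B = C*D := by
      linear_combination ((A+B+C+D)/2)*hs - (1/2 : ℝ)*hsq
    have hfac : (A-C)*(A-D) = 0 := by linear_combination A*hs - hpq
    rcases mul_eq_zero.mp hfac with h' | h'
    · exact Or.inr (Or.inl (by linarith))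
    · exact Or.inl ⟨by linarith, by linarith⟩
  · exfalso
    have hu : A+B - (C+D) ≠ 0 := sub_ne_zero.mpr hs
    have key4 : a * ((A+B)-(C+D))^5 * ((A+B)+(C+D)) = 0 := by
      linear_combination (-18/5:ℝ)*((A+B)-(C+D))^2*E4 + (-18/5:ℝ)*((1:ℝ)*(C+D)^2*(A*B) + (-1/6:ℝ)*(C+D)^4 + (1/2:ℝ)*(C+D)^4*a + (-1/3:ℝ)*(C+D)^4*a^2 + (-1:ℝ)*(A+B)*(C+D)*(C*D) + (-1:ℝ)*(A+B)*(C+D)*(A*B) + (5/3:ℝ)*(A+B)*(C+D)^3 + (1/3:ℝ)*(A+B)*(C+D)^3*a^2 + (1:ℝ)*(A+B)^2*(C*D) + (-3:ℝ)*(A+B)^2*(C+D)^2 + (-1:ℝ)*(A+B)^2*(C+D)^2*a + (5/3:ℝ)*(A+B)^3*(C+D) + (1/3:ℝ)*(A+B)^3*(C+D)*a^2 + (-1/6:ℝ)*(A+B)^4 + (1/2:ℝ)*(A+B)^4*a + (-1/3:ℝ)*(A+B)^4*a^2)*E2 + (-18/5:ℝ)*((2/3:ℝ)*(C+D)*(C*D)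 + (-2/3:ℝ)*(C+D)*(A*B) + (-1:ℝ)*(C+D)^3 + (-1/3:ℝ)*(C+D)^3*a + (-2/3:ℝ)*(A+B)*(C*D) + (2/3:ℝ)*(A+B)*(A*B) + (1:ℝ)*(A+B)*(C+D)^2 + (1/3:ℝ)*(A+B)*(C+D)^2*a + (1:ℝ)*(A+B)^2*(C+D) + (1/3:ℝ)*(A+B)^2*(C+D)*a + (-1:ℝ)*(A+B)^3 + (-1/3:ℝ)*(A+B)^3*a)*E3 + (18/5:ℝ)*((-1/6:ℝ)*(C+D)^6 + (1/9:ℝ)*(C+D)^6*a + (2/3:ℝ)*(A+B)*(C+D)^5 + (-4/9:ℝ)*(A+B)*(C+D)^5*a + (-5/6:ℝ)*(A+B)^2*(C+D)^4 + (5/9:ℝ)*(A+B)^2*(C+D)^4*a + (5/6:ℝ)*(A+B)^4*(C+D)^2 + (-5/9:ℝ)*(A+B)^4*(C+D)^2*a + (-2/3:ℝ)*(A+B)^5*(C+D) + (4/9:ℝ)*(A+B)^5*(C+D)*a + (1/6:ℝ)*(A+B)^6 + (-1/9:ℝ)*(A+B)^6*a)*ha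
    have hsum : (A+B) + (C+D) = 0 := by
      rcases mul_eq_zero.mp key4 with h' | h'
      · rcases mul_eq_zero.mp h' with h'' | h''
        · exact absurd h'' ha0
        · exact absurd h'' (pow_ne_zero 5 hu)
      · exact h'
    have key5 : (A+B)^7 * (3*a-2) = 0 := by
      linear_combination (81/40:ℝ)*((A+B)-(C+D))^2*E5 + (81/40:ℝ)*((-5/2:ℝ)*(A+B)*(C+D)^2*(C*D) + (5/2:ℝ)*(A+B)*(C+D)^2*(A*B) + (5/4:ℝ)*(A+B)*(C+D)^4 + (5/4:ℝ)*(A+B)*(C+D)^4*a + (5/2:ℝ)*(A+B)^2*(C+D)*(C*D) + (-5/2:ℝ)*(A+B)^2*(C+D)*(A*B) + (-5/4:ℝ)*(A+B)^2*(C+D)^3 + (-5/4:ℝ)*(A+B)^2*(C+D)^3*a + (-5/4:ℝ)*(A+B)^3*(C+D)^2 + (-5/4:ℝ)*(A+B)^3*(C+D)^2*a + (5/4:ℝ)*(A+B)^4*(C+D) + (5/4:ℝ)*(A+B)^4*(C+D)*a)*E2 + (81/40:ℝ)*((5/3:ℝ)*(C+D)^2*(C*D) + (-10/9:ℝ)*(C+D)^4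 + (-5/9:ℝ)*(C+D)^4*a^2 + (-5/3:ℝ)*(A+B)*(C+D)*(C*D) + (-5/3:ℝ)*(A+B)*(C+D)*(A*B) + (10/9:ℝ)*(A+B)*(C+D)^3 + (5/9:ℝ)*(A+B)*(C+D)^3*a^2 + (5/3:ℝ)*(A+B)^2*(A*B) + (10/9:ℝ)*(A+B)^3*(C+D) + (5/9:ℝ)*(A+B)^3*(C+D)*a^2 + (-10/9:ℝ)*(A+B)^4 + (-5/9:ℝ)*(A+B)^4*a^2)*E3 + (-81/40:ℝ)*((10/81:ℝ)*(C+D)^6 + (-5/27:ℝ)*(C+D)^6*a + (-85/162:ℝ)*(A+B)*(C+D)^5 + (85/108:ℝ)*(A+B)*(C+D)^5*a + (65/81:ℝ)*(A+B)^2*(C+D)^4 + (-65/54:ℝ)*(A+B)^2*(C+D)^4*a + (-40/81:ℝ)*(A+B)^3*(C+D)^3 + (20/27:ℝ)*(A+B)^3*(C+D)^3*a + (5/27:ℝ)*(A+B)^4*(C+D)^2 + (-5/18:ℝ)*(A+B)^4*(C+D)^2*a + (-25/54:ℝ)*(A+B)^5*(C+D) + (25/36:ℝ)*(A+B)^5*(C+D)*a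 + (70/81:ℝ)*(A+B)^6 + (-35/27:ℝ)*(A+B)^6*a)*hsum + (-81/40:ℝ)*((1/81:ℝ)*(C+D)^7 + (-4/27:ℝ)*(C+D)^7*a + (4/27:ℝ)*(C+D)^7*a^2 + (-13/324:ℝ)*(A+B)*(C+D)^6 + (13/27:ℝ)*(A+B)*(C+D)^6*a + (-13/27:ℝ)*(A+B)*(C+D)^6*a^2 + (1/36:ℝ)*(A+B)^2*(C+D)^5 + (-1/3:ℝ)*(A+B)^2*(C+D)^5*a + (1/3:ℝ)*(A+B)^2*(C+D)^5*a^2 + (5/162:ℝ)*(A+B)^3*(C+D)^4 + (-10/27:ℝ)*(A+B)^3*(C+D)^4*a + (10/27:ℝ)*(A+B)^3*(C+D)^4*a^2 + (-5/162:ℝ)*(A+B)^4*(C+D)^3 + (10/27:ℝ)*(A+B)^4*(C+D)^3*a + (-10/27:ℝ)*(A+B)^4*(C+D)^3*a^2 + (-1/36:ℝ)*(A+B)^5*(C+D)^2 + (1/3:ℝ)*(A+B)^5*(C+D)^2*a + (-1/3:ℝ)*(A+B)^5*(C+D)^2*a^2 + (13/324:ℝ)*(A+B)^6*(C+D) + (-13/27:ℝ)*(A+B)^6*(C+D)*a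 + (13/27:ℝ)*(A+B)^6*(C+D)*a^2 + (-1/81:ℝ)*(A+B)^7 + (4/27:ℝ)*(A+B)^7*a + (-4/27:ℝ)*(A+B)^7*a^2)*ha
    have h32 : 3*a-2 ≠ 0 := by intro hh; linarith
    have hs7 : (A+B)^7 = 0 := by
      rcases mul_eq_zero.mp key5 with h' | h'
      · exact h'
      · exact absurd h' h32
    have hAB0 : A+B = 0 := by
      exact pow_eq_zero_iff (by norm_num : (7:ℕ) ≠ 0) |>.mp hs7
    apply hu
    linarith
end
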